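/- Let 1/4 < H < 1 and let ρ be a real number satisfying: ρ < 4H-3 if 1/4 < H < 1/2, and ρ < 2(H-1) if 1/2 ≤ H < 1. Then the series ∑_{j ∈ ℤ²₀} |j|^{2ρ+2} · ( ∑_{h ∈ ℤ²₀, h ≠ j} 1/(|h|^{4H} |h-j|^{4H}) )² converges (is finite). -/

import Mathlib

/-- Euclidean norm of an element of `ℤ²`. -/
noncomputable def znorm (k : ℤ × ℤ) : ℝ :=
  Real.sqrt ((k.1 : ℝ) ^ 2 + (k.2 : ℝ) ^ 2)

/-!
For `h ∉ {0, j}` the larger of `|h|` and `|h - j|` is at least `|j| / 2`. Hence, for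
`0 ≤ s ≤ a`, the term `|h|^(-a) |h - j|^(-a)` is at most `(|j| / 2)^(-s)` times
`|h|^(-(2a - s)) + |h - j|^(-(2a - s))`, and when `2a - s > 2` both of these are summable over
`ℤ²`: the inner sum is `O(|j|^(-s))`. For `a = 4H` the hypotheses on `ρ` imply
`ρ + 2 < 4H - 1`, so we may pick `s` with `max (ρ + 2) 0 < s < 4H - 1`; the outer terms are then
`O(|j|^(2ρ + 2 - 2s))` with `2s - 2ρ - 2 > 2`.
-/

open Complex in
lemma znorm_eq_norm (k : ℤ × ℤ) : znorm k = ‖(k.1 : ℂ) + k.2 * I‖ := by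
  simpa [znorm] using (norm_add_mul_I (k.1 : ℝ) k.2).symm

lemma znorm_nonneg (k : ℤ × ℤ) : 0 ≤ znorm k := Real.sqrt_nonneg _

@[simp] lemma znorm_zero : znorm 0 = 0 := by simp [znorm]

lemma znorm_sub_le (a b : ℤ × ℤ) : znorm (a - b) ≤ znorm a + znorm b := by
  simp only [znorm_eq_norm, Prod.fst_sub, Prod.snd_sub, Int.cast_sub]
  convert norm_sub_le ((a.1 : ℂ) + a.2 * Complex.I) (b.1 + b.2 * Complex.I) using 1
  congr 1
  ring

lemma abs_fst_le_znorm (k : ℤ × ℤ) : |(k.1 : ℝ)| ≤ znorm k := by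
  simpa [znorm_eq_norm] using Complex.abs_re_le_norm ((k.1 : ℂ) + k.2 * Complex.I)

lemma abs_snd_le_znorm (k : ℤ × ℤ) : |(k.2 : ℝ)| ≤ znorm k := by
  simpa [znorm_eq_norm] using Complex.abs_im_le_norm ((k.1 : ℂ) + k.2 * Complex.I)

lemma one_le_znorm {k : ℤ × ℤ} (hk : k ≠ 0) : 1 ≤ znorm k := by
  obtain h | h : k.1 ≠ 0 ∨ k.2 ≠ 0 := by
    contrapose! hk
    exact Prod.ext hk.1 hk.2
  · exact le_trans (by exact_mod_cast Int.one_le_abs h) (abs_fst_le_znorm k)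
  · exact le_trans (by exact_mod_cast Int.one_le_abs h) (abs_snd_le_znorm k)

lemma znorm_pos {k : ℤ × ℤ} (hk : k ≠ 0) : 0 < znorm k :=
  zero_lt_one.trans_le (one_le_znorm hk)

lemma norm_le_znorm (x : Fin 2 → ℤ) : ‖x‖ ≤ znorm (x 0, x 1) := by
  refine (pi_norm_le_iff_of_nonneg (znorm_nonneg _)).2 fun i => ?_
  fin_cases i
  · simpa [Int.norm_eq_abs] using abs_fst_le_znorm (x 0, x 1)
  · simpa [Int.norm_eq_abs] using abs_snd_le_znorm (x 0, x 1)

lemma summable_znorm_rpow_neg {p : ℝ} (hp : 2 < p) :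
    Summable fun k : ℤ × ℤ => znorm k ^ (-p) := by
  rw [← (finTwoArrowEquiv ℤ).summable_iff]
  refine (EisensteinSeries.summable_one_div_norm_rpow hp).of_nonneg_of_le
    (fun x => Real.rpow_nonneg (znorm_nonneg _) _) fun x => ?_
  rcases eq_or_ne x 0 with rfl | hx
  · simp [← Prod.zero_eq_mk, Real.zero_rpow (by linarith : -p ≠ 0)]
  · exact Real.rpow_le_rpow_of_nonpos (norm_pos_iff.2 hx) (norm_le_znorm x) (by linarith)

lemma summable_znorm_sub_rpow_neg {p : ℝ} (hp : 2 < p) (j : ℤ × ℤ) :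
    Summable fun k : ℤ × ℤ => znorm (k - j) ^ (-p) :=
  (Equiv.subRight j).summable_iff.2 (summable_znorm_rpow_neg hp)

lemma tsum_znorm_sub_rpow_neg (p : ℝ) (j : ℤ × ℤ) :
    ∑' k : ℤ × ℤ, znorm (k - j) ^ (-p) = ∑' k : ℤ × ℤ, znorm k ^ (-p) :=
  (Equiv.subRight j).tsum_eq (fun k => znorm k ^ (-p))

lemma one_div_rpow_mul_rpow_le_of_le {x y a s : ℝ} (hy : 0 < y) (hyx : y ≤ x) (hsa : s ≤ a) :
    1 / (x ^ a * y ^ a) ≤ x ^ (-s) * y ^ (-(2 * a - s)) := by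
  have hx : 0 < x := hy.trans_le hyx
  calc 1 / (x ^ a * y ^ a) = x ^ (-s) * (x ^ (-(a - s)) * y ^ (-a)) := by
        rw [Real.rpow_neg hy.le, one_div, mul_inv, ← Real.rpow_neg hx.le, ← mul_assoc,
          ← Real.rpow_add hx]
        ring_nf
    _ ≤ x ^ (-s) * (y ^ (-(a - s)) * y ^ (-a)) := by
        refine mul_le_mul_of_nonneg_left (mul_le_mul_of_nonneg_right ?_ ?_) ?_
        · exact Real.rpow_le_rpow_of_nonpos hy hyx (by linarith)
        all_goals positivity
    _ = x ^ (-s) * y ^ (-(2 * a - s)) := by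
        rw [← Real.rpow_add hy]
        ring_nf

lemma one_div_rpow_mul_rpow_le {x y z a s : ℝ} (hx : 0 < x) (hy : 0 < y) (hz : 0 < z)
    (hzxy : z ≤ x + y) (hs : 0 ≤ s) (hsa : s ≤ a) :
    1 / (x ^ a * y ^ a) ≤ (z / 2) ^ (-s) * (x ^ (-(2 * a - s)) + y ^ (-(2 * a - s))) := by
  wlog hyx : y ≤ x generalizing x y
  · rw [mul_comm, add_comm]
    exact this hy hx (by linarith) (le_of_not_ge hyx)
  calc 1 / (x ^ a * y ^ a) ≤ x ^ (-s) * y ^ (-(2 * a - s)) :=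
        one_div_rpow_mul_rpow_le_of_le hy hyx hsa
    _ ≤ (z / 2) ^ (-s) * (x ^ (-(2 * a - s)) + y ^ (-(2 * a - s))) := by
        refine mul_le_mul (Real.rpow_le_rpow_of_nonpos (by positivity) (by linarith) (by linarith))
          (le_add_of_nonneg_left ?_) ?_ ?_ <;> positivity

noncomputable def latticeConv (a : ℝ) (j : ℤ × ℤ) : ℝ :=
  ∑' h : {h : ℤ × ℤ // h ≠ 0 ∧ h ≠ j}, 1 / (znorm h.1 ^ a * znorm (h.1 - j) ^ a)

lemma latticeConv_nonneg (a : ℝ) (j : ℤ × ℤ) : 0 ≤ latticeConv a j :=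
  tsum_nonneg fun _ => one_div_nonneg.2 <|
    mul_nonneg (Real.rpow_nonneg (znorm_nonneg _) _) (Real.rpow_nonneg (znorm_nonneg _) _)

lemma exists_latticeConv_le {a s : ℝ} (hs : 0 ≤ s) (hsa : s ≤ a) (hs2 : s < 2 * a - 2) :
    ∃ C, ∀ j ≠ 0, latticeConv a j ≤ C * znorm j ^ (-s) := by
  set b := 2 * a - s
  have hb : 2 < b := by linarith
  refine ⟨2 ^ s * (2 * ∑' k : ℤ × ℤ, znorm k ^ (-b)), fun j hj => ?_⟩
  set g : ℤ × ℤ → ℝ := fun h => znorm h ^ (-b) + znorm (h - j) ^ (-b)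
  have hg : Summable g := (summable_znorm_rpow_neg hb).add (summable_znorm_sub_rpow_neg hb j)
  have hg0 (h : ℤ × ℤ) : 0 ≤ g h :=
    add_nonneg (Real.rpow_nonneg (znorm_nonneg _) _) (Real.rpow_nonneg (znorm_nonneg _) _)
  have hterm (h : {h : ℤ × ℤ // h ≠ 0 ∧ h ≠ j}) :
      1 / (znorm h.1 ^ a * znorm (h.1 - j) ^ a) ≤ (znorm j / 2) ^ (-s) * g h :=
    one_div_rpow_mul_rpow_le (znorm_pos h.2.1) (znorm_pos (sub_ne_zero.2 h.2.2)) (znorm_pos hj)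
      (by simpa using znorm_sub_le h.1 (h.1 - j)) hs hsa
  have hdom : Summable fun h : {h : ℤ × ℤ // h ≠ 0 ∧ h ≠ j} => (znorm j / 2) ^ (-s) * g h :=
    (hg.subtype _).mul_left _
  calc latticeConv a j ≤ ∑' h : {h : ℤ × ℤ // h ≠ 0 ∧ h ≠ j}, (znorm j / 2) ^ (-s) * g h :=
        Summable.tsum_le_tsum hterm (hdom.of_nonneg_of_le
          (fun _ => one_div_nonneg.2 <| mul_nonneg (Real.rpow_nonneg (znorm_nonneg _) _)
            (Real.rpow_nonneg (znorm_nonneg _) _)) hterm) hdom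
    _ ≤ (znorm j / 2) ^ (-s) * ∑' h, g h := by
        rw [tsum_mul_left]
        refine mul_le_mul_of_nonneg_left ?_ (Real.rpow_nonneg (by linarith [znorm_pos hj]) _)
        exact tsum_comp_le_tsum_of_inj hg hg0 Subtype.val_injective
    _ = 2 ^ s * (2 * ∑' k : ℤ × ℤ, znorm k ^ (-b)) * znorm j ^ (-s) := by
        rw [Summable.tsum_add (summable_znorm_rpow_neg hb) (summable_znorm_sub_rpow_neg hb j),
          tsum_znorm_sub_rpow_neg, Real.div_rpow (znorm_nonneg j) zero_le_two,
          Real.rpow_neg zero_le_two, div_inv_eq_mul]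
        ring

lemma summable_rpow_mul_sq_of_le {f : ℤ × ℤ → ℝ} {C s t : ℝ} (hf0 : ∀ j, 0 ≤ f j)
    (hf : ∀ j ≠ 0, f j ≤ C * znorm j ^ (-s)) (hst : t + 2 < 2 * s) :
    Summable fun j : {j : ℤ × ℤ // j ≠ 0} => znorm j.1 ^ t * f j.1 ^ 2 := by
  refine (((summable_znorm_rpow_neg (p := 2 * s - t) (by linarith)).subtype _).mul_left
    (C ^ 2)).of_nonneg_of_le
    (fun j => mul_nonneg (Real.rpow_nonneg (znorm_nonneg _) _) (sq_nonneg _)) fun j => ?_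
  have hz := znorm_pos j.2
  calc znorm j.1 ^ t * f j.1 ^ 2 ≤ znorm j.1 ^ t * (C * znorm j.1 ^ (-s)) ^ 2 := by
        gcongr
        exacts [hf0 _, hf j j.2]
    _ = C ^ 2 * znorm j.1 ^ (-(2 * s - t)) := by
        rw [mul_pow, ← Real.rpow_mul_natCast hz.le, mul_left_comm, ← Real.rpow_add hz]
        ring_nf

theorem statement_12 (H ρ : ℝ) (hH1 : 1 / 4 < H) (hH2 : H < 1)
    (hρ1 : 1 / 4 < H → H < 1 / 2 → ρ < 4 * H - 3)
    (hρ2 : 1 / 2 ≤ H → H < 1 → ρ < 2 * (H - 1)) :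
    Summable (fun j : {j : ℤ × ℤ // j ≠ 0} =>
      znorm j.1 ^ (2 * ρ + 2) *
        (∑' h : {h : ℤ × ℤ // h ≠ 0 ∧ h ≠ j.1},
            1 / (znorm h.1 ^ (4 * H) * znorm (h.1 - j.1) ^ (4 * H))) ^ 2) := by
  have hρ : ρ + 2 < 4 * H - 1 := by
    rcases lt_or_ge H (1 / 2) with h | h
    · linarith [hρ1 hH1 h]
    · linarith [hρ2 h hH2]
  obtain ⟨s, hs, hs'⟩ := exists_between (max_lt hρ (by linarith : (0 : ℝ) < 4 * H - 1))
  obtain ⟨C, hC⟩ := exists_latticeConv_le (a := 4 * H) ((le_max_right _ _).trans hs.le)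
    (by linarith) (by linarith)
  exact summable_rpow_mul_sq_of_le (f := latticeConv (4 * H)) (t := 2 * ρ + 2)
    (latticeConv_nonneg _) hC (by linarith [le_max_left (ρ + 2) 0])
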